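/- Consequently, for L ⊆ {b, b̄}* and k ≥ 1, the hairpin completion H_k(a*·L·ā^k, ∅) is regular if and only if L is empty. -/

import Mathlib

inductive Letter : Type
  | a | abar | b | bbar
deriving DecidableEq

def lbar : Letter → Letter
  | .a => .abar
  | .abar => .a
  | .b => .bbar
  | .bbar => .b

def barw {α : Type} (bar : α → α) (w : List α) : List α := (w.map bar).reverse

def hairpin {α : Type} (bar : α → α) (k : ℕ) (L₁ L₂ : Language α) : Language α :=
  { w | ∃ γ a β : List α, w = γ ++ a ++ β ++ barw bar a ++ barw bar γ ∧
      a.length = k ∧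
      (γ ++ a ++ β ++ barw bar a ∈ L₁ ∨ a ++ β ++ barw bar a ++ barw bar γ ∈ L₂) }

/-!
Track the balance `|w|_a - |w|_ā`. Since `bar` swaps `a` and `ā`, a hairpin word
`γ α β ᾱ γ̄` has the same balance as its loop `β`, which here is a factor of some `a^i u` with
`u ∈ {b, b̄}*`, so every word of the completion has nonnegative balance. If the completion were
regular, Myhill–Nerode would give `m < n` with `a^m` and `a^n` having the same left quotient;
as `a^n u ā^n` lies in the completion, so would `a^m u ā^n`, of balance `m - n < 0`.
-/

section Involution

variable {α : Type} (bar : α → α)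

theorem barw_replicate (n : ℕ) (c : α) :
    barw bar (List.replicate n c) = List.replicate n (bar c) := by
  simp [barw]

theorem count_barw [DecidableEq α] (hbar : Function.Involutive bar) (c : α) (x : List α) :
    (barw bar x).count c = x.count (bar c) := by
  conv_lhs => rw [← hbar c]
  rw [barw, List.count_reverse, List.count_map_of_injective _ _ hbar.injective]

theorem hairpin_zero_zero (k : ℕ) : hairpin bar k 0 0 = 0 :=
  Set.eq_empty_of_forall_notMem fun _ ⟨_, _, _, _, _, h⟩ ↦
    h.elim (Language.notMem_zero _) (Language.notMem_zero _)

end Involution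

theorem Language.isRegular_zero {α : Type*} : (0 : Language α).IsRegular :=
  ⟨Unit, inferInstance, ⟨fun _ _ => (), (), ∅⟩, by ext; simp [DFA.mem_accepts]⟩

theorem Language.IsRegular.exists_lt_leftQuotient_replicate_eq {α : Type*} {L : Language α}
    (h : L.IsRegular) (c : α) (N : ℕ) :
    ∃ m n, N ≤ m ∧ m < n ∧
      L.leftQuotient (List.replicate m c) = L.leftQuotient (List.replicate n c) := by
  obtain ⟨i, j, hij, hq⟩ := h.finite_range_leftQuotient.exists_lt_map_eq_of_forall_mem
    (f := fun i ↦ L.leftQuotient (List.replicate (N + i) c)) (fun _ ↦ Set.mem_range_self _)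
  exact ⟨N + i, N + j, by omega, by omega, hq⟩

theorem lbar_involutive : Function.Involutive lbar := by
  intro c; cases c <;> rfl

def aBalance (w : List Letter) : ℤ := w.count .a - w.count .abar

section aBalance

@[simp]
theorem aBalance_append (x y : List Letter) : aBalance (x ++ y) = aBalance x + aBalance y := by
  simp only [aBalance, List.count_append]
  omega

@[simp]
theorem aBalance_barw (x : List Letter) : aBalance (barw lbar x) = -aBalance x := by
  simp only [aBalance, count_barw lbar lbar_involutive, lbar]
  ring

@[simp]
theorem aBalance_replicate_a (n : ℕ) : aBalance (List.replicate n .a) = n := by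
  simp [aBalance, List.count_replicate]

@[simp]
theorem aBalance_replicate_abar (n : ℕ) : aBalance (List.replicate n .abar) = -n := by
  simp [aBalance, List.count_replicate]

theorem aBalance_nonneg_of_abar_notMem {x : List Letter} (hx : Letter.abar ∉ x) :
    0 ≤ aBalance x := by
  simp [aBalance, List.count_eq_zero_of_not_mem hx]

theorem aBalance_eq_zero_of_forall_mem {x : List Letter}
    (hx : ∀ c ∈ x, c = Letter.b ∨ c = Letter.bbar) : aBalance x = 0 := by
  have hcount (c : Letter) (hc : c = .a ∨ c = .abar) : x.count c = 0 :=
    List.count_eq_zero.mpr fun hmem ↦ by rcases hc with rfl | rfl <;> simpa using hx _ hmem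
  simp [aBalance, hcount .a, hcount .abar]

theorem aBalance_hairpin (γ α β : List Letter) :
    aBalance (γ ++ α ++ β ++ barw lbar α ++ barw lbar γ) = aBalance β := by
  simp only [aBalance_append, aBalance_barw]
  ring

end aBalance

-- `a* · L · ā^k`
def aStarMulAbarPow (k : ℕ) (L : Language Letter) : Language Letter :=
  { w | ∃ i : ℕ, ∃ u ∈ L, w = List.replicate i Letter.a ++ u ++ List.replicate k Letter.abar }

theorem aStarMulAbarPow_zero (k : ℕ) : aStarMulAbarPow k 0 = 0 :=
  Set.eq_empty_of_forall_notMem fun _ ⟨_, _, hu, _⟩ ↦ Language.notMem_zero _ hu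

section HairpinOfAStarMulAbarPow

variable {k : ℕ} {L : Language Letter}

theorem replicate_append_replicate_mem_hairpin {n : ℕ} (hn : k ≤ n) {u : List Letter}
    (hu : u ∈ L) :
    List.replicate n .a ++ u ++ List.replicate n .abar ∈
      hairpin lbar k (aStarMulAbarPow k L) 0 := by
  obtain ⟨d, rfl⟩ := Nat.exists_eq_add_of_le' hn
  refine ⟨List.replicate d .a, List.replicate k .a, u, ?_, List.length_replicate,
    .inl ⟨d + k, u, hu, ?_⟩⟩ <;>
  simp only [barw_replicate, lbar, List.append_assoc, List.replicate_append_replicate,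
    Nat.add_comm k d]

theorem aBalance_nonneg_of_mem_hairpin (hL : ∀ w ∈ L, ∀ c ∈ w, c = Letter.b ∨ c = Letter.bbar)
    {w : List Letter} (hw : w ∈ hairpin lbar k (aStarMulAbarPow k L) 0) : 0 ≤ aBalance w := by
  obtain ⟨γ, α, β, rfl, hα, ⟨i, u, hu, hsplit⟩ | h⟩ := hw
  · have hprefix : γ ++ α ++ β = List.replicate i .a ++ u :=
      (List.append_inj' hsplit (by simp [barw, hα])).1
    have hβ : Letter.abar ∉ β := fun hmem ↦ by
      have : Letter.abar ∈ List.replicate i .a ++ u := hprefix ▸ List.mem_append_right _ hmem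
      obtain h | h := hL u hu _ (by simpa using this) <;> cases h
    rw [aBalance_hairpin]
    exact aBalance_nonneg_of_abar_notMem hβ
  · exact absurd h (Language.notMem_zero _)

end HairpinOfAStarMulAbarPow

theorem hairpin_regular_iff_empty_general {k : ℕ} (L : Language Letter)
    (hL : ∀ w ∈ L, ∀ c ∈ w, c = Letter.b ∨ c = Letter.bbar) :
    Language.IsRegular
      (hairpin lbar k
        { w | ∃ i : ℕ, ∃ u ∈ L,
            w = List.replicate i Letter.a ++ u ++ List.replicate k Letter.abar }
        (0 : Language Letter)) ↔ L = 0 := by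
  change (hairpin lbar k (aStarMulAbarPow k L) 0).IsRegular ↔ L = 0
  constructor
  · intro hreg
    by_contra hne
    obtain ⟨u, hu⟩ := Set.nonempty_iff_ne_empty.mpr hne
    obtain ⟨m, n, hkm, hmn, hq⟩ := hreg.exists_lt_leftQuotient_replicate_eq .a k
    have hmem : u ++ List.replicate n .abar ∈
        (hairpin lbar k (aStarMulAbarPow k L) 0).leftQuotient (List.replicate n .a) := by
      simpa [List.append_assoc] using replicate_append_replicate_mem_hairpin (by omega) hu
    rw [← hq, Language.mem_leftQuotient, ← List.append_assoc] at hmem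
    have := aBalance_nonneg_of_mem_hairpin hL hmem
    simp only [aBalance_append, aBalance_replicate_a, aBalance_replicate_abar,
      aBalance_eq_zero_of_forall_mem (hL u hu)] at this
    omega
  · rintro rfl
    rw [aStarMulAbarPow_zero, hairpin_zero_zero]
    exact Language.isRegular_zero

theorem hairpin_regular_iff_empty {k : ℕ} (hk : 1 ≤ k) (L : Language Letter)
    (hL : ∀ w ∈ L, ∀ c ∈ w, c = Letter.b ∨ c = Letter.bbar) :
    Language.IsRegular
      (hairpin lbar k
        { w | ∃ i : ℕ, ∃ u ∈ L,
            w = List.replicate i Letter.a ++ u ++ List.replicate k Letter.abar }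
        (0 : Language Letter)) ↔ L = 0 :=
  hairpin_regular_iff_empty_general L hL
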